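/- arXiv:2009.09252 — 3 statements merged into one kernel-verified Lean document; each statement's English description precedes it below -/
import Mathlib

section
/- For every a in the open unit disk 𝔻 and every integer k ≥ 1, the integral J(a) = ∫_{𝔻} |ξ|^{2/k - 2} / |1 - ξ·a|⁴ dA(ξ) (with respect to Lebesgue area measure) satisfies J(a) ≤ C·(1 - |a|²)^{-2} for a constant C depending only on k. -/
open Complex ComplexConjugate MeasureTheory Set Metric
open scoped Real

/-!
Split the disk at `‖ξ‖ = 1/2`. On the inner part `‖1 - ξa‖ ≥ 1/2`, and the weight `‖ξ‖ ^ s` is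
integrable because `s > -2`. On the outer part the weight is at most `(1/2) ^ s`, which leaves the
Forelli–Rudin integral `∫_𝔻 ‖1 - ξa‖⁻⁴`. The disk automorphism `φ(ξ) = (ξ - conj a) / (1 - ξa)` has
real Jacobian `‖φ'(ξ)‖² = (1 - ‖a‖²)² / ‖1 - ξa‖⁴` and maps `𝔻` injectively into `𝔻`, so by the
area formula `(1 - ‖a‖²)² ∫_𝔻 ‖1 - ξa‖⁻⁴ = area (φ 𝔻) ≤ π`.
-/

namespace ForelliRudin

lemma det_restrictScalars_toSpanSingleton (z : ℂ) :
    ((ContinuousLinearMap.toSpanSingleton ℂ z).restrictScalars ℝ).det = ‖z‖ ^ 2 := by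
  simp [ContinuousLinearMap.det, LinearMap.det_restrictScalars, Algebra.norm_complex_eq,
    Complex.normSq_eq_norm_sq]

theorem integral_norm_deriv_sq_eq_measureReal_image {f f' : ℂ → ℂ} {s : Set ℂ}
    (hs : MeasurableSet s) (hf : ∀ z ∈ s, HasDerivWithinAt f (f' z) s z) (hinj : InjOn f s) :
    ∫ z in s, ‖f' z‖ ^ 2 = volume.real (f '' s) := by
  have hf' : ∀ z ∈ s, HasFDerivWithinAt f
      ((ContinuousLinearMap.toSpanSingleton ℂ (f' z)).restrictScalars ℝ) s z :=
    fun z hz ↦ (hf z hz).hasFDerivWithinAt.restrictScalars ℝ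
  have := integral_image_eq_integral_abs_det_fderiv_smul volume hs hf' hinj (fun _ ↦ (1 : ℝ))
  simpa [det_restrictScalars_toSpanSingleton] using this.symm

noncomputable def moebius (a ξ : ℂ) : ℂ := (ξ - conj a) / (1 - ξ * a)

lemma normSq_one_sub_mul_sub_normSq_sub_conj (a ξ : ℂ) :
    normSq (1 - ξ * a) - normSq (ξ - conj a) = (1 - normSq a) * (1 - normSq ξ) := by
  simp only [normSq_apply, sub_re, sub_im, mul_re, mul_im, one_re, one_im, conj_re, conj_im]
  ring

lemma one_sub_mul_ne_zero {a ξ : ℂ} (hξ : ‖ξ‖ ≤ 1) (ha : ‖a‖ < 1) : 1 - ξ * a ≠ 0 := by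
  have : ‖ξ * a‖ < 1 := by
    rw [norm_mul]; nlinarith [norm_nonneg ξ, norm_nonneg a]
  intro h
  rw [← sub_eq_zero.mp h, norm_one] at this
  exact this.false

lemma moebius_mapsTo {a : ℂ} (ha : ‖a‖ < 1) : MapsTo (moebius a) (ball 0 1) (ball 0 1) := by
  intro ξ hξ
  rw [mem_ball_zero_iff] at hξ ⊢
  have hd := one_sub_mul_ne_zero hξ.le ha
  rw [moebius, norm_div, div_lt_one (norm_pos_iff.mpr hd)]
  have key := normSq_one_sub_mul_sub_normSq_sub_conj a ξ
  simp only [normSq_eq_norm_sq] at key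
  have : 0 < (1 - ‖a‖ ^ 2) * (1 - ‖ξ‖ ^ 2) := by
    apply mul_pos <;> nlinarith [norm_nonneg a, norm_nonneg ξ]
  nlinarith [norm_nonneg (ξ - conj a), norm_nonneg (1 - ξ * a)]

lemma moebius_injOn {a : ℂ} (ha : ‖a‖ < 1) : InjOn (moebius a) (ball 0 1) := by
  intro ξ hξ η hη h
  rw [mem_ball_zero_iff] at hξ hη
  have hξ' := one_sub_mul_ne_zero hξ.le ha
  have hη' := one_sub_mul_ne_zero hη.le ha
  have hna : 1 - a * conj a ≠ 0 := by
    rw [mul_conj, ← ofReal_one, ← ofReal_sub, ofReal_ne_zero, normSq_eq_norm_sq]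
    nlinarith [norm_nonneg a]
  simp only [moebius, div_eq_div_iff hξ' hη'] at h
  have : (ξ - η) * (1 - a * conj a) = 0 := by linear_combination h
  exact sub_eq_zero.mp ((mul_eq_zero.mp this).resolve_right hna)

lemma hasDerivAt_moebius {a ξ : ℂ} (h : 1 - ξ * a ≠ 0) :
    HasDerivAt (moebius a) (((1 - ‖a‖ ^ 2 : ℝ) : ℂ) / (1 - ξ * a) ^ 2) ξ := by
  have := ((hasDerivAt_id' ξ).sub_const (conj a)).div
    (((hasDerivAt_id' ξ).mul_const a).const_sub 1) h
  exact this.congr_deriv (by push_cast; rw [← mul_conj']; ring)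

lemma norm_deriv_moebius_sq {a ξ : ℂ} (ha : ‖a‖ ≤ 1) :
    ‖((1 - ‖a‖ ^ 2 : ℝ) : ℂ) / (1 - ξ * a) ^ 2‖ ^ 2
      = (1 - ‖a‖ ^ 2) ^ 2 * (‖1 - ξ * a‖ ^ 4)⁻¹ := by
  rw [norm_div, norm_real, norm_pow, Real.norm_eq_abs,
    abs_of_nonneg (by nlinarith [norm_nonneg a])]
  ring

theorem integral_ball_inv_norm_one_sub_mul_pow_four_le {a : ℂ} (ha : ‖a‖ < 1) :
    ∫ ξ in ball (0 : ℂ) 1, (‖1 - ξ * a‖ ^ 4)⁻¹ ≤ π / (1 - ‖a‖ ^ 2) ^ 2 := by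
  have hpos : 0 < (1 - ‖a‖ ^ 2) ^ 2 := by
    have : ‖a‖ ^ 2 < 1 := by nlinarith [norm_nonneg a]
    positivity
  have hderiv : ∀ ξ ∈ ball (0 : ℂ) 1,
      HasDerivWithinAt (moebius a) (((1 - ‖a‖ ^ 2 : ℝ) : ℂ) / (1 - ξ * a) ^ 2) (ball 0 1) ξ :=
    fun ξ hξ ↦ (hasDerivAt_moebius
      (one_sub_mul_ne_zero (mem_ball_zero_iff.mp hξ).le ha)).hasDerivWithinAt
  have harea :=
    integral_norm_deriv_sq_eq_measureReal_image measurableSet_ball hderiv (moebius_injOn ha)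
  simp only [norm_deriv_moebius_sq ha.le, integral_const_mul] at harea
  rw [le_div_iff₀ hpos, mul_comm, harea]
  calc volume.real (moebius a '' ball 0 1) ≤ volume.real (ball (0 : ℂ) 1) :=
        measureReal_mono (moebius_mapsTo ha).image_subset measure_ball_lt_top.ne
    _ = π := by simp [measureReal_def]

lemma integrableOn_ball_norm_rpow {s : ℝ} (hs : -2 < s) :
    IntegrableOn (fun ξ : ℂ ↦ ‖ξ‖ ^ s) (ball 0 1) := by
  refine integrableOn_ball_of_norm_le_rpow (μ := volume) (C := 1) (α := -s) (by simp)
    (by rw [finrank_real_complex]; push_cast; linarith) (ae_of_all _ fun ξ ↦ ?_)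
    (measurable_norm.pow_const s).aestronglyMeasurable
  simp [abs_of_nonneg (Real.rpow_nonneg (norm_nonneg ξ) s)]

lemma integrableOn_ball_inv_norm_one_sub_mul_pow {a : ℂ} (ha : ‖a‖ < 1) (n : ℕ) :
    IntegrableOn (fun ξ : ℂ ↦ (‖1 - ξ * a‖ ^ n)⁻¹) (ball 0 1) := by
  refine (ContinuousOn.integrableOn_compact (isCompact_closedBall 0 1) ?_).mono_set
    ball_subset_closedBall
  refine ContinuousOn.inv₀ (by fun_prop) fun ξ hξ ↦ ?_
  exact pow_ne_zero n
    (norm_ne_zero_iff.mpr (one_sub_mul_ne_zero (mem_closedBall_zero_iff.mp hξ) ha))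

lemma rpow_div_norm_one_sub_mul_pow_four_le {s : ℝ} (hs : s ≤ 0) {a : ℂ} (ha : ‖a‖ ≤ 1)
    (ξ : ℂ) :
    ‖ξ‖ ^ s / ‖1 - ξ * a‖ ^ 4 ≤ 16 * ‖ξ‖ ^ s + (1 / 2) ^ s * (‖1 - ξ * a‖ ^ 4)⁻¹ := by
  have hw := Real.rpow_nonneg (norm_nonneg ξ) s
  rcases le_or_gt ‖ξ‖ (1 / 2) with hξ | hξ
  · have hden : 1 / 2 ≤ ‖1 - ξ * a‖ := by
      have : ‖ξ * a‖ ≤ 1 / 2 := by rw [norm_mul]; nlinarith [norm_nonneg ξ, norm_nonneg a]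
      have := norm_sub_norm_le (1 : ℂ) (ξ * a)
      rw [norm_one] at this
      linarith
    calc ‖ξ‖ ^ s / ‖1 - ξ * a‖ ^ 4 ≤ ‖ξ‖ ^ s / (1 / 2) ^ 4 := by gcongr
      _ = 16 * ‖ξ‖ ^ s := by ring
      _ ≤ 16 * ‖ξ‖ ^ s + (1 / 2) ^ s * (‖1 - ξ * a‖ ^ 4)⁻¹ :=
        le_add_of_nonneg_right (by positivity)
  · calc ‖ξ‖ ^ s / ‖1 - ξ * a‖ ^ 4 ≤ (1 / 2) ^ s * (‖1 - ξ * a‖ ^ 4)⁻¹ := by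
          rw [div_eq_mul_inv]
          exact mul_le_mul_of_nonneg_right (Real.rpow_le_rpow_of_nonpos (by norm_num) hξ.le hs)
            (by positivity)
      _ ≤ 16 * ‖ξ‖ ^ s + (1 / 2) ^ s * (‖1 - ξ * a‖ ^ 4)⁻¹ := by linarith

theorem integral_ball_rpow_div_norm_one_sub_mul_pow_four_le {s : ℝ} (hs₀ : -2 < s) (hs : s ≤ 0)
    {a : ℂ} (ha : ‖a‖ < 1) :
    ∫ ξ in ball (0 : ℂ) 1, ‖ξ‖ ^ s / ‖1 - ξ * a‖ ^ 4
      ≤ 16 * (∫ ξ in ball (0 : ℂ) 1, ‖ξ‖ ^ s) + (1 / 2) ^ s * (π / (1 - ‖a‖ ^ 2) ^ 2) := by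
  have hweight := integrableOn_ball_norm_rpow hs₀
  have hkernel := integrableOn_ball_inv_norm_one_sub_mul_pow ha 4
  calc ∫ ξ in ball (0 : ℂ) 1, ‖ξ‖ ^ s / ‖1 - ξ * a‖ ^ 4
      ≤ ∫ ξ in ball (0 : ℂ) 1, (16 * ‖ξ‖ ^ s + (1 / 2) ^ s * (‖1 - ξ * a‖ ^ 4)⁻¹) :=
        integral_mono_of_nonneg (ae_of_all _ fun ξ ↦ by positivity)
          ((hweight.const_mul 16).add (hkernel.const_mul _))
          (ae_of_all _ (rpow_div_norm_one_sub_mul_pow_four_le hs ha.le))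
    _ = 16 * (∫ ξ in ball (0 : ℂ) 1, ‖ξ‖ ^ s)
          + (1 / 2) ^ s * ∫ ξ in ball (0 : ℂ) 1, (‖1 - ξ * a‖ ^ 4)⁻¹ := by
        rw [integral_add (hweight.const_mul 16) (hkernel.const_mul _), integral_const_mul,
          integral_const_mul]
    _ ≤ 16 * (∫ ξ in ball (0 : ℂ) 1, ‖ξ‖ ^ s) + (1 / 2) ^ s * (π / (1 - ‖a‖ ^ 2) ^ 2) := by
        gcongr
        exact integral_ball_inv_norm_one_sub_mul_pow_four_le ha

theorem exists_integral_ball_rpow_div_norm_one_sub_mul_pow_four_le {s : ℝ} (hs₀ : -2 < s)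
    (hs : s ≤ 0) :
    ∃ C : ℝ, 0 < C ∧ ∀ a : ℂ, ‖a‖ < 1 →
      ∫ ξ in ball (0 : ℂ) 1, ‖ξ‖ ^ s / ‖1 - ξ * a‖ ^ 4 ≤ C * (1 - ‖a‖ ^ 2) ^ (-2 : ℝ) := by
  set M := ∫ ξ in ball (0 : ℂ) 1, ‖ξ‖ ^ s
  have hM : 0 ≤ M := setIntegral_nonneg measurableSet_ball fun ξ _ ↦ by positivity
  refine ⟨16 * M + (1 / 2) ^ s * π, by positivity, fun a ha ↦ ?_⟩
  have ht₀ : 0 < 1 - ‖a‖ ^ 2 := by nlinarith [norm_nonneg a]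
  have ht₁ : (1 - ‖a‖ ^ 2) ^ 2 ≤ 1 := by
    rw [sq_le_one_iff₀ ht₀.le]; linarith [sq_nonneg ‖a‖]
  have hrpow : (1 - ‖a‖ ^ 2) ^ (-2 : ℝ) = 1 / (1 - ‖a‖ ^ 2) ^ 2 := by
    rw [Real.rpow_neg ht₀.le, one_div, ← Real.rpow_natCast]; norm_num
  calc ∫ ξ in ball (0 : ℂ) 1, ‖ξ‖ ^ s / ‖1 - ξ * a‖ ^ 4
      ≤ 16 * M + (1 / 2) ^ s * (π / (1 - ‖a‖ ^ 2) ^ 2) :=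
        integral_ball_rpow_div_norm_one_sub_mul_pow_four_le hs₀ hs ha
    _ ≤ 16 * M / (1 - ‖a‖ ^ 2) ^ 2 + (1 / 2) ^ s * (π / (1 - ‖a‖ ^ 2) ^ 2) := by
        gcongr
        exact le_div_self (by positivity) (by positivity) ht₁
    _ = (16 * M + (1 / 2) ^ s * π) * (1 - ‖a‖ ^ 2) ^ (-2 : ℝ) := by
        rw [hrpow]; ring

end ForelliRudin

/-- Forelli–Rudin type estimate: for `a` in the unit disk and integer `k ≥ 1`,
`J(a) = ∫_𝔻 |ξ|^{2/k-2} / |1-ξa|⁴ dA(ξ) ≤ C (1-|a|²)^{-2}` with `C = C(k)`. -/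
theorem stmt2 (k : ℕ) (hk : 1 ≤ k) :
    ∃ C : ℝ, 0 < C ∧ ∀ a : ℂ, ‖a‖ < 1 →
      (∫ ξ in Metric.ball (0 : ℂ) 1, ‖ξ‖ ^ ((2 : ℝ) / k - 2) / ‖1 - ξ * a‖ ^ 4)
        ≤ C * (1 - ‖a‖ ^ 2) ^ (-2 : ℝ) := by
  have hk' : (1 : ℝ) ≤ k := by exact_mod_cast hk
  refine ForelliRudin.exists_integral_ball_rpow_div_norm_one_sub_mul_pow_four_le ?_ ?_
  · have : 0 < (2 : ℝ) / k := by positivity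
    linarith
  · have : (2 : ℝ) / k ≤ 2 := div_le_self zero_le_two hk'
    linarith
end

section
/- Let ℍ_k be the fat Hartogs triangle and let 𝒫(z,w) = z₂conj(w₂)/((1-z₂conj(w₂))²(z₂conj(w₂)-(z₁conj(w₁))^k)²). Define R(z,w) = q_k(s) + p_k(s)t + (s^k/t)p_k(s) with s = z₁conj(w₁), t = z₂conj(w₂). Then for each fixed w ∈ ℍ_k, the function z ↦ R(z,w) is holomorphic on ℍ_k, and R(w,w) ≥ 1 for all w ∈ ℍ_k. -/
open Complex ComplexConjugate

/-!
On the diagonal `s = |w₁|²` and `t = |w₂|²` are nonnegative reals. In the partial order of `ℂ`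
(`z ≤ w ↔ z.re ≤ w.re ∧ z.im = w.im`) every monomial of `p_k` and `q_k` is then `≥ 0` and the
`j = 1` term of `q_k` is `≥ 1`, so `1 ≤ R(w,w)`: this is the reality and the bound at once.
Holomorphy holds because `t = z₂ conj w₂` does not vanish on `ℍ_k`.
-/
/-- The fat Hartogs triangle `ℍ_k`. -/
def hartogsTriangle (k : ℕ) : Set (ℂ × ℂ) :=
  {z | ‖z.1‖ ^ k < ‖z.2‖ ∧ ‖z.2‖ < 1}

/-- `p_k(s) = Σ_{j=1}^{k-1} j(k-j) s^{j-1}` (`p₁ ≡ 0`). -/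
noncomputable def pPoly (k : ℕ) (s : ℂ) : ℂ :=
  ∑ j ∈ Finset.Ico 1 k, ((j * (k - j) : ℕ) : ℂ) * s ^ (j - 1)

/-- `q_k(s) = Σ_{j=1}^{k} (j² + (k-j)² s^k) s^{j-1}`. -/
noncomputable def qPoly (k : ℕ) (s : ℂ) : ℂ :=
  ∑ j ∈ Finset.Icc 1 k, (((j ^ 2 : ℕ) : ℂ) + (((k - j) ^ 2 : ℕ) : ℂ) * s ^ k) * s ^ (j - 1)

/-- `R(z,w) = q_k(s) + p_k(s) t + (s^k/t) p_k(s)`, `s = z₁·conj w₁`, `t = z₂·conj w₂`. -/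
noncomputable def Rker (k : ℕ) (z w : ℂ × ℂ) : ℂ :=
  let s := z.1 * conj w.1
  let t := z.2 * conj w.2
  qPoly k s + pPoly k s * t + s ^ k / t * pPoly k s

open scoped ComplexOrder

theorem snd_ne_zero_of_mem_hartogsTriangle {k : ℕ} {z : ℂ × ℂ} (hz : z ∈ hartogsTriangle k) :
    z.2 ≠ 0 :=
  norm_pos_iff.mp ((by positivity : 0 ≤ ‖z.1‖ ^ k).trans_lt hz.1)

theorem differentiable_pPoly (k : ℕ) : Differentiable ℂ (pPoly k) := by
  unfold pPoly
  fun_prop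

theorem differentiable_qPoly (k : ℕ) : Differentiable ℂ (qPoly k) := by
  unfold qPoly
  fun_prop

theorem differentiableAt_Rker {k : ℕ} {z w : ℂ × ℂ} (hz : z.2 ≠ 0) (hw : w.2 ≠ 0) :
    DifferentiableAt ℂ (fun z => Rker k z w) z := by
  have ht : z.2 * conj w.2 ≠ 0 := mul_ne_zero hz ((map_ne_zero _).mpr hw)
  have := differentiable_pPoly k
  have := differentiable_qPoly k
  unfold Rker
  fun_prop (disch := exact ht)

theorem pPoly_nonneg (k : ℕ) {s : ℂ} (hs : 0 ≤ s) : 0 ≤ pPoly k s :=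
  Finset.sum_nonneg fun _ _ => mul_nonneg (Nat.cast_nonneg _) (pow_nonneg hs _)

theorem one_le_qPoly {k : ℕ} (hk : 1 ≤ k) {s : ℂ} (hs : 0 ≤ s) : 1 ≤ qPoly k s := by
  have hterm : ∀ j ∈ Finset.Icc 1 k,
      0 ≤ (((j ^ 2 : ℕ) : ℂ) + (((k - j) ^ 2 : ℕ) : ℂ) * s ^ k) * s ^ (j - 1) := fun _ _ =>
    mul_nonneg (add_nonneg (Nat.cast_nonneg _) (mul_nonneg (Nat.cast_nonneg _) (pow_nonneg hs _)))
      (pow_nonneg hs _)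
  calc (1 : ℂ)
      ≤ (((1 ^ 2 : ℕ) : ℂ) + (((k - 1) ^ 2 : ℕ) : ℂ) * s ^ k) * s ^ (1 - 1) := by
        simpa using mul_nonneg (pow_nonneg (Nat.cast_nonneg (k - 1)) 2) (pow_nonneg hs k)
    _ ≤ qPoly k s := Finset.single_le_sum hterm (Finset.mem_Icc.mpr ⟨le_rfl, hk⟩)

theorem one_le_Rker_self {k : ℕ} (hk : 1 ≤ k) (w : ℂ × ℂ) : 1 ≤ Rker k w w := by
  have hs := mul_star_self_nonneg w.1
  have hp := pPoly_nonneg k hs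
  have ht := mul_star_self_nonneg w.2
  calc (1 : ℂ) ≤ qPoly k (w.1 * conj w.1) := one_le_qPoly hk hs
    _ ≤ Rker k w w := le_add_of_le_of_nonneg (le_add_of_nonneg_right (mul_nonneg hp ht))
      (mul_nonneg (div_nonneg (pow_nonneg hs k) ht) hp)

/-- For each fixed `w ∈ ℍ_k`, `z ↦ R(z,w)` is holomorphic on `ℍ_k`, and `R(w,w)` is a
real number `≥ 1`. -/
theorem stmt11 (k : ℕ) (hk : 1 ≤ k) :
    ∀ w ∈ hartogsTriangle k,
      DifferentiableOn ℂ (fun z => Rker k z w) (hartogsTriangle k) ∧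
      (Rker k w w).im = 0 ∧ 1 ≤ (Rker k w w).re := by
  intro w hw
  obtain ⟨hre, him⟩ := le_def.mp (one_le_Rker_self hk w)
  refine ⟨fun z hz => ?_, by simpa using him.symm, by simpa using hre⟩
  exact (differentiableAt_Rker (snd_ne_zero_of_mem_hartogsTriangle hz)
    (snd_ne_zero_of_mem_hartogsTriangle hw)).differentiableWithinAt
end

section
/- Take k = 2 and the sequences z_j = (-(1-1/j), 1-1/j), w_j = ((1-1/j), 1-1/j) in ℍ₂ = {(z₁,z₂) : |z₁|² < |z₂| < 1}. Then (a) the pseudo-hyperbolic conditions |((z_{j,1}²/z_{j,2}) - (w_{j,1}²/w_{j,2}))/(1 - z_{j,1}²conj(w_{j,1})²/(z_{j,2}conj(w_{j,2})))| < 1/e and |(z_{j,2}-w_{j,2})/(1-z_{j,2}conj(w_{j,2}))| < 1/e hold for all large j (in fact the first quantity is 0 and the second is 0), while (b) the Skwarczyński quantity d_S(z_j,w_j) = (1 - |K(z_j,w_j)|/(√K(z_j,z_j)√K(w_j,w_j)))^{1/2} tends to 1 as j → ∞, where K is the Bergman kernel of ℍ₂ given by K(z,w) = ((1+4s+s²)t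 + s² + t²)/(2π²(1-t)²(t-s²)²) with s = z₁conj(w₁), t = z₂conj(w₂). -/
/-! At the points `(±a, a)` with `a = 1 - 1/j` the Bergman kernel is explicit,
`K((-a,a),(a,a)) = 1/(2π²a²(1-a²)²)` while `K(z,z) = (1+6a²+a⁴)/(2π²a²(1-a²)⁴)` on the
diagonal, so the normalized kernel equals `(1-a²)²/(1+6a²+a⁴)`, which tends to `0` as `a → 1`.
The pseudo-hyperbolic quantities vanish because `z₁²/z₂` and `z₂` agree at the two points. -/

open Complex ComplexConjugate Filter

/-- The fat Hartogs triangle `ℍ₂ = {(z₁,z₂) : |z₁|² < |z₂| < 1}`. -/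
def hartogsTriangle2 : Set (ℂ × ℂ) :=
  {z | ‖z.1‖ ^ 2 < ‖z.2‖ ∧ ‖z.2‖ < 1}

/-- Edholm's Bergman kernel of `ℍ₂`: `K(z,w) = ((1+4s+s²)t + s² + t²)/(2π²(1-t)²(t-s²)²)`. -/
noncomputable def bergmanH2 (z w : ℂ × ℂ) : ℂ :=
  let s := z.1 * conj w.1
  let t := z.2 * conj w.2
  ((1 + 4 * s + s ^ 2) * t + s ^ 2 + t ^ 2) /
    (2 * (Real.pi : ℂ) ^ 2 * (1 - t) ^ 2 * (t - s ^ 2) ^ 2)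

noncomputable def zseq (j : ℕ) : ℂ × ℂ := (-(1 - 1 / (j : ℂ)), 1 - 1 / (j : ℂ))
noncomputable def wseq (j : ℕ) : ℂ × ℂ := (1 - 1 / (j : ℂ), 1 - 1 / (j : ℂ))

open scoped Real Topology

noncomputable def skwarczynskiDistH2 (z w : ℂ × ℂ) : ℝ :=
  √(1 - ‖bergmanH2 z w‖ / (√(bergmanH2 z z).re * √(bergmanH2 w w).re))

section RealPoints

variable {a : ℝ}

lemma mk_mem_hartogsTriangle2 {c : ℂ} (hc : ‖c‖ = a) (ha0 : 0 < a) (ha1 : a < 1) :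
    (c, (a : ℂ)) ∈ hartogsTriangle2 := by
  simp only [hartogsTriangle2, Set.mem_ofPred_eq, hc, Complex.norm_real, Real.norm_eq_abs,
    abs_of_pos ha0]
  exact ⟨by nlinarith, ha1⟩

lemma bergmanH2_neg_self (ha0 : 0 < a) (ha1 : a < 1) :
    bergmanH2 (-(a : ℂ), a) (a, a) = ((1 / (2 * π ^ 2 * a ^ 2 * (1 - a ^ 2) ^ 2) : ℝ) : ℂ) := by
  have ha : (a : ℂ) ≠ 0 := by exact_mod_cast ha0.ne'
  have ha2 : 1 - (a : ℂ) ^ 2 ≠ 0 := by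
    exact_mod_cast (show (1 - a ^ 2 : ℝ) ≠ 0 by nlinarith)
  have hπ : (π : ℂ) ≠ 0 := by exact_mod_cast Real.pi_ne_zero
  simp only [bergmanH2, conj_ofReal]
  push_cast
  field_simp
  ring

lemma bergmanH2_self_of_norm_eq {c : ℂ} (hc : ‖c‖ = a) (ha0 : 0 < a) (ha1 : a < 1) :
    bergmanH2 (c, a) (c, a) =
      (((1 + 6 * a ^ 2 + a ^ 4) / (2 * π ^ 2 * a ^ 2 * (1 - a ^ 2) ^ 4) : ℝ) : ℂ) := by
  have ha : (a : ℂ) ≠ 0 := by exact_mod_cast ha0.ne'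
  have ha2 : 1 - (a : ℂ) ^ 2 ≠ 0 := by
    exact_mod_cast (show (1 - a ^ 2 : ℝ) ≠ 0 by nlinarith)
  have hπ : (π : ℂ) ≠ 0 := by exact_mod_cast Real.pi_ne_zero
  simp only [bergmanH2, conj_ofReal, mul_conj', hc]
  push_cast
  field_simp
  ring

lemma skwarczynskiDistH2_neg_self (ha0 : 0 < a) (ha1 : a < 1) :
    skwarczynskiDistH2 (-(a : ℂ), a) (a, a) = √(1 - (1 - a ^ 2) ^ 2 / (1 + 6 * a ^ 2 + a ^ 4)) := by
  have hneg : ‖-(a : ℂ)‖ = a := by rw [norm_neg, Complex.norm_of_nonneg ha0.le]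
  have hpos : ‖(a : ℂ)‖ = a := Complex.norm_of_nonneg ha0.le
  rw [skwarczynskiDistH2, bergmanH2_neg_self ha0 ha1, bergmanH2_self_of_norm_eq hneg ha0 ha1,
    bergmanH2_self_of_norm_eq hpos ha0 ha1, ofReal_re, Real.mul_self_sqrt (by positivity),
    norm_real, Real.norm_of_nonneg (by positivity)]
  have : 0 < 1 - a ^ 2 := by nlinarith
  field_simp

end RealPoints

lemma tendsto_sqrt_one_sub_ratio :
    Tendsto (fun a : ℝ => √(1 - (1 - a ^ 2) ^ 2 / (1 + 6 * a ^ 2 + a ^ 4))) (𝓝 1) (𝓝 1) := by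
  have hcont : ContinuousAt (fun a : ℝ => √(1 - (1 - a ^ 2) ^ 2 / (1 + 6 * a ^ 2 + a ^ 4))) 1 :=
    ContinuousAt.sqrt <| continuousAt_const.sub <|
      ContinuousAt.div (by fun_prop) (by fun_prop) (by norm_num)
  simpa using hcont.tendsto

lemma zseq_eq (j : ℕ) : zseq j = (-((1 - 1 / j : ℝ) : ℂ), ((1 - 1 / j : ℝ) : ℂ)) := by
  simp [zseq]

lemma wseq_eq (j : ℕ) : wseq j = (((1 - 1 / j : ℝ) : ℂ), ((1 - 1 / j : ℝ) : ℂ)) := by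
  simp [wseq]

lemma one_sub_inv_mem_Ioo {j : ℕ} (hj : 2 ≤ j) : 0 < 1 - 1 / (j : ℝ) ∧ 1 - 1 / (j : ℝ) < 1 := by
  have hj' : (2 : ℝ) ≤ j := by exact_mod_cast hj
  constructor
  · rw [sub_pos, div_lt_one (by linarith)]; linarith
  · have : 0 < 1 / (j : ℝ) := by positivity
    linarith

/-- For `z_j = (-(1-1/j), 1-1/j)` and `w_j = ((1-1/j), 1-1/j)` in `ℍ₂`, the two
pseudo-hyperbolic quantities are `< 1/e` (indeed both vanish), yet the Skwarczyński
quantity `d_S(z_j,w_j)` tends to `1`. -/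
theorem stmt17 :
    (∀ j : ℕ, 2 ≤ j → zseq j ∈ hartogsTriangle2 ∧ wseq j ∈ hartogsTriangle2) ∧
    (∀ j : ℕ, 2 ≤ j →
      ‖((zseq j).1 ^ 2 / (zseq j).2 - (wseq j).1 ^ 2 / (wseq j).2) /
          (1 - (zseq j).1 ^ 2 * conj ((wseq j).1) ^ 2 /
              ((zseq j).2 * conj ((wseq j).2)))‖ < 1 / Real.exp 1 ∧
      ‖((zseq j).2 - (wseq j).2) / (1 - (zseq j).2 * conj ((wseq j).2))‖
        < 1 / Real.exp 1) ∧
    Tendsto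
      (fun j : ℕ =>
        Real.sqrt (1 - ‖bergmanH2 (zseq j) (wseq j)‖ /
          (Real.sqrt ((bergmanH2 (zseq j) (zseq j)).re) *
            Real.sqrt ((bergmanH2 (wseq j) (wseq j)).re))))
      atTop (nhds 1) := by
  refine ⟨fun j hj => ?_, fun j _ => ?_, ?_⟩
  · obtain ⟨h0, h1⟩ := one_sub_inv_mem_Ioo hj
    rw [zseq_eq, wseq_eq]
    exact ⟨mk_mem_hartogsTriangle2 (by rw [norm_neg, Complex.norm_of_nonneg h0.le]) h0 h1,
      mk_mem_hartogsTriangle2 (Complex.norm_of_nonneg h0.le) h0 h1⟩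
  · have hpos : (0 : ℝ) < 1 / Real.exp 1 := by positivity
    simp only [zseq, wseq, neg_sq, sub_self, zero_div, norm_zero]
    exact ⟨hpos, hpos⟩
  · have ha : Tendsto (fun j : ℕ => 1 - 1 / (j : ℝ)) atTop (𝓝 1) := by
      simpa using tendsto_const_nhds.sub (tendsto_one_div_atTop_nhds_zero_nat (𝕜 := ℝ))
    refine (tendsto_sqrt_one_sub_ratio.comp ha).congr' ?_
    filter_upwards [eventually_ge_atTop 2] with j hj
    obtain ⟨h0, h1⟩ := one_sub_inv_mem_Ioo hj
    rw [Function.comp_apply, ← skwarczynskiDistH2_neg_self h0 h1, ← zseq_eq, ← wseq_eq]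
    rfl
end
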